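/- arXiv:1207.1925 — 2 statements merged into one kernel-verified Lean document; each statement's English description precedes it below -/
import Mathlib

section
/- Tropical quadratic formula, case 2: let a, b, c ∈ ℝ with 2b ≥ a + c, and let F(x) = min(a + 2x, b + x, c). Then the set of x ∈ ℝ where the minimum in F(x) is achieved at least twice equals {(c - a)/2}. -/
/-- Tropical quadratic formula, case 2b ≥ a+c: the tropical vanishing set of
min(a+2x, b+x, c) is {(c-a)/2}. -/
theorem tropical_quadratic_formula_case2 (a b c : ℝ) (h : 2 * b ≥ a + c)
    (F : Fin 3 → ℝ → ℝ)
    (h0 : ∀ x, F 0 x = a + 2 * x) (h1 : ∀ x, F 1 x = b + x)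
    (h2 : ∀ x, F 2 x = c) :
    {x : ℝ | ∃ i j : Fin 3, i ≠ j ∧ F i x = F j x ∧ ∀ k, F i x ≤ F k x}
      = {(c - a) / 2} := by
  ext x
  simp only [Set.mem_setOf_eq, Set.mem_singleton_iff]
  constructor
  · rintro ⟨i, j, hij, heq, hmin⟩
    have m0 := hmin 0
    have m1 := hmin 1
    have m2 := hmin 2
    fin_cases i <;> fin_cases j <;>
      simp_all [h0, h1, h2] <;> linarith
  · rintro rfl
    refine ⟨0, 2, by decide, ?_, ?_⟩
    · rw [h0, h2]; ring
    · intro k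
      fin_cases k <;> simp [h0, h1, h2] <;> linarith
end

section
/- For Laurent polynomials f, g over a valued field, with trop(f)(w) defined as the minimum over exponents of (valuation of the coefficient + w·exponent), one has trop(fg)(w) = trop(f)(w) + trop(g)(w) for every w ∈ ℝⁿ at which the minimum defining trop(f)(w) and the minimum defining trop(g)(w) are each attained uniquely. -/
open Finset in
theorem trop_aux_sum_le {K : Type*} [Field K] (v : K → ℝ)
    (hadd : ∀ a b : K, a ≠ 0 → b ≠ 0 → a + b ≠ 0 → min (v a) (v b) ≤ v (a + b))
    {ι : Type*} (s : Finset ι) (F : ι → K) (c : ℝ)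
    (h : ∀ i ∈ s, F i ≠ 0 → c ≤ v (F i)) (hs : ∑ i ∈ s, F i ≠ 0) :
    c ≤ v (∑ i ∈ s, F i) := by
  induction s using Finset.cons_induction with
  | empty => simp at hs
  | @cons a s hx ih =>
    rw [Finset.sum_cons] at hs ⊢
    by_cases ha : F a = 0
    · rw [ha, zero_add] at hs ⊢
      exact ih (fun i hi => h i (Finset.mem_cons_of_mem hi)) hs
    · by_cases hrest : ∑ i ∈ s, F i = 0
      · rw [hrest, add_zero] at hs ⊢
        exact h a (Finset.mem_cons_self a s) ha
      · exact le_trans (le_min (h a (Finset.mem_cons_self a s) ha)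
          (ih (fun i hi => h i (Finset.mem_cons_of_mem hi)) hrest))
          (hadd _ _ ha hrest hs)

open Finset in
theorem trop_aux_sum_lt {K : Type*} [Field K] (v : K → ℝ)
    (hadd : ∀ a b : K, a ≠ 0 → b ≠ 0 → a + b ≠ 0 → min (v a) (v b) ≤ v (a + b))
    {ι : Type*} (s : Finset ι) (F : ι → K) (c : ℝ)
    (h : ∀ i ∈ s, F i ≠ 0 → c < v (F i)) (hs : ∑ i ∈ s, F i ≠ 0) :
    c < v (∑ i ∈ s, F i) := by
  induction s using Finset.cons_induction with
  | empty => simp at hs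
  | @cons a s hx ih =>
    rw [Finset.sum_cons] at hs ⊢
    by_cases ha : F a = 0
    · rw [ha, zero_add] at hs ⊢
      exact ih (fun i hi => h i (Finset.mem_cons_of_mem hi)) hs
    · by_cases hrest : ∑ i ∈ s, F i = 0
      · rw [hrest, add_zero] at hs ⊢
        exact h a (Finset.mem_cons_self a s) ha
      · exact lt_of_lt_of_le (lt_min (h a (Finset.mem_cons_self a s) ha)
          (ih (fun i hi => h i (Finset.mem_cons_of_mem hi)) hrest))
          (hadd _ _ ha hrest hs)

open Finset in
/-- The tropicalization of a Laurent polynomial F = Σ c_u x^u at w: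
min over u in the support of (val(c_u) + w·u). -/
noncomputable def tropEval {n : ℕ} {K : Type*} [Field K] (v : K → ℝ)
    (w : Fin n → ℝ) (F : AddMonoidAlgebra K (Fin n → ℤ)) : ℝ :=
  sInf ((fun u => v (F.coeff u) + ∑ i, w i * (u i : ℝ)) '' ↑F.coeff.support)

open Finset in
/-- Tropicalization is additive on products: if at w the minimum defining
trop(f)(w) and the minimum defining trop(g)(w) are each attained by a unique
exponent, then fg ≠ 0 and trop(fg)(w) = trop(f)(w) + trop(g)(w). -/
theorem trop_mul (n : ℕ) (K : Type*) [Field K] (v : K → ℝ)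
    (hmul : ∀ a b : K, a ≠ 0 → b ≠ 0 → v (a * b) = v a + v b)
    (hadd : ∀ a b : K, a ≠ 0 → b ≠ 0 → a + b ≠ 0 → min (v a) (v b) ≤ v (a + b))
    (f g : AddMonoidAlgebra K (Fin n → ℤ)) (hf : f ≠ 0) (hg : g ≠ 0)
    (w : Fin n → ℝ)
    (huf : ∃ u ∈ f.coeff.support, ∀ u' ∈ f.coeff.support, u' ≠ u →
      v (f.coeff u) + ∑ i, w i * (u i : ℝ) < v (f.coeff u') + ∑ i, w i * (u' i : ℝ))
    (hug : ∃ u ∈ g.coeff.support, ∀ u' ∈ g.coeff.support, u' ≠ u →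
      v (g.coeff u) + ∑ i, w i * (u i : ℝ) < v (g.coeff u') + ∑ i, w i * (u' i : ℝ)) :
    f * g ≠ 0 ∧ tropEval v w (f * g) = tropEval v w f + tropEval v w g := by
  classical
  obtain ⟨uf, hufs, hufmin⟩ := huf
  obtain ⟨ug, hugs, hugmin⟩ := hug
  set φ : (Fin n → ℤ) → ℝ := fun u => ∑ i, w i * (u i : ℝ) with hφdef
  have hφadd : ∀ a b : Fin n → ℤ, φ (a + b) = φ a + φ b := by
    intro a b
    simp only [hφdef]
    rw [← Finset.sum_add_distrib]
    refine Finset.sum_congr rfl fun i _ => ?_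
    push_cast [Pi.add_apply]
    ring
  -- values of v on units
  have v1 : v (1 : K) = 0 := by
    have := hmul 1 1 one_ne_zero one_ne_zero
    rw [one_mul] at this; linarith
  have vm1 : v (-1 : K) = 0 := by
    have := hmul (-1) (-1) (by norm_num) (by norm_num)
    rw [neg_mul_neg, one_mul, v1] at this; linarith
  have vneg : ∀ a : K, a ≠ 0 → v (-a) = v a := by
    intro a ha
    have := hmul (-1) a (by norm_num) ha
    rw [neg_one_mul] at this
    rw [this, vm1, zero_add]
  have hfne : f.coeff uf ≠ 0 := Finsupp.mem_support_iff.mp hufs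
  have hgne : g.coeff ug ≠ 0 := Finsupp.mem_support_iff.mp hugs
  set tf := v (f.coeff uf) + φ uf with htfdef
  set tg := v (g.coeff ug) + φ ug with htgdef
  have hfge : ∀ u' ∈ f.coeff.support, tf ≤ v (f.coeff u') + φ u' := by
    intro u' hu'
    by_cases h : u' = uf
    · subst h; exact le_refl _
    · exact le_of_lt (hufmin u' hu' h)
  have hgge : ∀ u' ∈ g.coeff.support, tg ≤ v (g.coeff u') + φ u' := by
    intro u' hu'
    by_cases h : u' = ug
    · subst h; exact le_refl _
    · exact le_of_lt (hugmin u' hu' h)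
  -- coefficient formula
  have hcoeff : ∀ u : Fin n → ℤ, (f * g).coeff u =
      ∑ p ∈ f.coeff.support ×ˢ g.coeff.support, if p.1 + p.2 = u then f.coeff p.1 * g.coeff p.2 else 0 := by
    intro u
    rw [AddMonoidAlgebra.mul_apply, Finset.sum_product]
    rfl
  -- strict bound on non-leading terms of the coefficient at uf + ug
  set S := f.coeff.support ×ˢ g.coeff.support with hSdef
  set T : (Fin n → ℤ) × (Fin n → ℤ) → K :=
    fun p => if p.1 + p.2 = uf + ug then f.coeff p.1 * g.coeff p.2 else 0 with hTdef
  have hmemp : (uf, ug) ∈ S := Finset.mem_product.mpr ⟨hufs, hugs⟩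
  have hsplit : (f * g).coeff (uf + ug) = f.coeff uf * g.coeff ug + ∑ p ∈ S.erase (uf, ug), T p := by
    rw [hcoeff, ← Finset.add_sum_erase S T hmemp, hTdef]
    simp
  have hlead : f.coeff uf * g.coeff ug ≠ 0 := mul_ne_zero hfne hgne
  have hvlead : v (f.coeff uf * g.coeff ug) = v (f.coeff uf) + v (g.coeff ug) := hmul _ _ hfne hgne
  have hterm : ∀ p ∈ S.erase (uf, ug), T p ≠ 0 →
      v (f.coeff uf) + v (g.coeff ug) < v (T p) := by
    intro p hp hTne
    obtain ⟨hpne, hpS⟩ := Finset.mem_erase.mp hp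
    obtain ⟨hp1, hp2⟩ := Finset.mem_product.mp hpS
    have hf1 : f.coeff p.1 ≠ 0 := Finsupp.mem_support_iff.mp hp1
    have hg2 : g.coeff p.2 ≠ 0 := Finsupp.mem_support_iff.mp hp2
    have hcond : p.1 + p.2 = uf + ug := by
      by_contra hc
      rw [hTdef] at hTne
      simp only [if_neg hc] at hTne
      exact hTne rfl
    have hTval : T p = f.coeff p.1 * g.coeff p.2 := by rw [hTdef]; simp [hcond]
    rw [hTval, hmul _ _ hf1 hg2]
    have hφeq : φ p.1 + φ p.2 = φ uf + φ ug := by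
      rw [← hφadd, ← hφadd, hcond]
    by_cases h1 : p.1 = uf
    · have h2 : p.2 ≠ ug := by
        intro h2; exact hpne (Prod.ext h1 h2)
      have := hugmin p.2 hp2 h2
      have hfle : tf ≤ v (f.coeff p.1) + φ p.1 := hfge p.1 hp1
      rw [htfdef, htgdef] at *
      linarith
    · have := hufmin p.1 hp1 h1
      have hgle : tg ≤ v (g.coeff p.2) + φ p.2 := hgge p.2 hp2
      rw [htfdef, htgdef] at *
      linarith
  set r := ∑ p ∈ S.erase (uf, ug), T p with hrdef
  have hvr : r ≠ 0 → v (f.coeff uf) + v (g.coeff ug) < v r :=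
    fun hr => trop_aux_sum_lt v hadd _ T _ hterm hr
  -- the leading coefficient is nonzero with known valuation
  have hkey : f.coeff uf * g.coeff ug + r ≠ 0 ∧ v (f.coeff uf * g.coeff ug + r) = v (f.coeff uf) + v (g.coeff ug) := by
    by_cases hr : r = 0
    · rw [hr, add_zero]
      exact ⟨hlead, hvlead⟩
    · have hvr' := hvr hr
      have hs0 : f.coeff uf * g.coeff ug + r ≠ 0 := by
        intro h0
        have : r = -(f.coeff uf * g.coeff ug) := by linear_combination h0 - (f.coeff uf * g.coeff ug + r) + r
        rw [this, vneg _ hlead] at hvr'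
        rw [hvlead] at hvr'
        exact lt_irrefl _ hvr'
      refine ⟨hs0, le_antisymm ?_ ?_⟩
      · have h2 := hadd (f.coeff uf * g.coeff ug + r) (-r) hs0 (neg_ne_zero.mpr hr) (by
          rw [add_neg_cancel_right]; exact hlead)
        rw [add_neg_cancel_right, vneg _ hr] at h2
        rcases min_cases (v (f.coeff uf * g.coeff ug + r)) (v r) with ⟨heq, h'⟩ | ⟨heq, h'⟩ <;>
          rw [heq] at h2 <;> linarith
      · have h1 := hadd _ _ hlead hr hs0
        rcases min_cases (v (f.coeff uf * g.coeff ug)) (v r) with ⟨heq, h'⟩ | ⟨heq, h'⟩ <;>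
          rw [heq] at h1 <;> linarith
  have hcne : (f * g).coeff (uf + ug) ≠ 0 := by rw [hsplit]; exact hkey.1
  have hvc : v ((f * g).coeff (uf + ug)) = v (f.coeff uf) + v (g.coeff ug) := by rw [hsplit]; exact hkey.2
  have hfgne : f * g ≠ 0 := by
    intro h0
    rw [h0] at hcne
    simp at hcne
  -- lower bound on every coefficient of f * g
  have hlow : ∀ u ∈ (f * g).coeff.support, tf + tg ≤ v ((f * g).coeff u) + φ u := by
    intro u hu
    have hne : (f * g).coeff u ≠ 0 := Finsupp.mem_support_iff.mp hu
    rw [hcoeff] at hne ⊢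
    have := trop_aux_sum_le v hadd S
      (fun p => if p.1 + p.2 = u then f.coeff p.1 * g.coeff p.2 else 0) (tf + tg - φ u) ?_ hne
    · linarith
    · intro p hpS hTne
      obtain ⟨hp1, hp2⟩ := Finset.mem_product.mp hpS
      have hf1 : f.coeff p.1 ≠ 0 := Finsupp.mem_support_iff.mp hp1
      have hg2 : g.coeff p.2 ≠ 0 := Finsupp.mem_support_iff.mp hp2
      have hcond : p.1 + p.2 = u := by
        by_contra hc
        simp only [if_neg hc] at hTne
        exact hTne rfl
      show tf + tg - φ u ≤ v (if p.1 + p.2 = u then f.coeff p.1 * g.coeff p.2 else 0)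
      rw [if_pos hcond, hmul _ _ hf1 hg2]
      have hφeq : φ p.1 + φ p.2 = φ u := by rw [← hφadd, hcond]
      have h1 := hfge p.1 hp1
      have h2 := hgge p.2 hp2
      linarith
  -- tropEval of a polynomial with a least term
  have htrop : ∀ (F : AddMonoidAlgebra K (Fin n → ℤ)),
      tropEval v w F = sInf ((fun u => v (F.coeff u) + φ u) '' ↑F.coeff.support) := fun F => rfl
  have htf : tropEval v w f = tf := by
    rw [htrop]
    refine IsLeast.csInf_eq ⟨⟨uf, by exact_mod_cast hufs, rfl⟩, ?_⟩
    rintro x ⟨u', hu', rfl⟩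
    exact hfge u' (by exact_mod_cast hu')
  have htg : tropEval v w g = tg := by
    rw [htrop]
    refine IsLeast.csInf_eq ⟨⟨ug, by exact_mod_cast hugs, rfl⟩, ?_⟩
    rintro x ⟨u', hu', rfl⟩
    exact hgge u' (by exact_mod_cast hu')
  have htfg : tropEval v w (f * g) = tf + tg := by
    rw [htrop]
    refine IsLeast.csInf_eq ⟨⟨uf + ug, ?_, ?_⟩, ?_⟩
    · exact_mod_cast Finsupp.mem_support_iff.mpr hcne
    · show v ((f * g).coeff (uf + ug)) + φ (uf + ug) = tf + tg
      rw [hvc, hφadd, htfdef, htgdef]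
      ring
    · rintro x ⟨u', hu', rfl⟩
      exact hlow u' (by exact_mod_cast hu')
  exact ⟨hfgne, by rw [htfg, htf, htg]⟩
end
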